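/- arXiv:0904.2903 — 2 statements merged into one kernel-verified Lean document; each statement's English description precedes it below -/
import Mathlib

section
/- Let G be a Lie group with finitely many components, let A be a compact Lie group acting on G by automorphisms, and let K be an A-invariant maximal compact subgroup of G. Then K ⋊ A is a maximal compact subgroup of the semidirect product G ⋊ A. -/
open scoped Manifold Pointwise

/-- The topology on the semidirect product `G ⋊[φ] A`: the underlying space is `G × A`, with the
product topology. -/
instance semidirectProductTopology {G A : Type*} [Group G] [Group A] [TopologicalSpace G]
    [TopologicalSpace A] (φ : A →* MulAut G) : TopologicalSpace (G ⋊[φ] A) :=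
  TopologicalSpace.induced (fun p : G ⋊[φ] A => (p.left, p.right)) inferInstance

/-!
A compact subgroup `L ⊇ K ⋊ A` contains `A`, so `p ∈ L` iff `p.left ∈ L`; hence
`L = K' ⋊ A` with `K' = L ∩ G`. The group `K'` is the image of `L` under the continuous
projection `p ↦ p.left`, so it is compact and contains `K`, and maximality of `K` gives `K' = K`.
-/

namespace SemidirectProduct

variable {N G : Type*} [Group N] [Group G] {φ : G →* MulAut N}

/-- `K ⋊ G` for a `G`-invariant subgroup `K` of `N`. -/
def subgroupLeft (K : Subgroup N) (hK : ∀ g, ∀ n ∈ K, φ g n ∈ K) : Subgroup (N ⋊[φ] G) where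
  carrier := {p | p.left ∈ K}
  one_mem' := K.one_mem
  mul_mem' hp hq := K.mul_mem hp (hK _ _ hq)
  inv_mem' hp := hK _ _ (K.inv_mem hp)

@[simp]
theorem mem_subgroupLeft {K : Subgroup N} {hK : ∀ g, ∀ n ∈ K, φ g n ∈ K} {p : N ⋊[φ] G} :
    p ∈ subgroupLeft K hK ↔ p.left ∈ K :=
  Iff.rfl

theorem comap_inl_subgroupLeft (K : Subgroup N) (hK : ∀ g, ∀ n ∈ K, φ g n ∈ K) :
    (subgroupLeft K hK).comap inl = K := by
  ext n
  simp

theorem range_inr_le_subgroupLeft (K : Subgroup N) (hK : ∀ g, ∀ n ∈ K, φ g n ∈ K) :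
    (inr : G →* N ⋊[φ] G).range ≤ subgroupLeft K hK := by
  rintro _ ⟨g, rfl⟩
  simp

variable {L : Subgroup (N ⋊[φ] G)}

theorem inl_left_mem_iff (hL : (inr : G →* N ⋊[φ] G).range ≤ L) {p : N ⋊[φ] G} :
    inl p.left ∈ L ↔ p ∈ L := by
  conv_rhs => rw [← inl_left_mul_inr_right p]
  exact (L.mul_mem_cancel_right (hL ⟨p.right, rfl⟩)).symm

theorem map_mem_comap_inl (hL : (inr : G →* N ⋊[φ] G).range ≤ L) :
    ∀ g, ∀ n ∈ L.comap inl, φ g n ∈ L.comap inl := by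
  intro g n hn
  rw [Subgroup.mem_comap, inl_aut]
  exact L.mul_mem (L.mul_mem (hL ⟨g, rfl⟩) hn) (hL ⟨g⁻¹, rfl⟩)

theorem eq_subgroupLeft_comap_inl (hL : (inr : G →* N ⋊[φ] G).range ≤ L) :
    L = subgroupLeft (L.comap inl) (map_mem_comap_inl hL) := by
  ext p
  rw [mem_subgroupLeft, Subgroup.mem_comap, inl_left_mem_iff hL]

theorem coe_comap_inl_eq_image_left (hL : (inr : G →* N ⋊[φ] G).range ≤ L) :
    (L.comap inl : Set N) = left '' (L : Set (N ⋊[φ] G)) := by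
  ext n
  refine ⟨fun hn => ⟨inl n, hn, left_inl n⟩, ?_⟩
  rintro ⟨p, hp, rfl⟩
  exact (inl_left_mem_iff hL).2 hp

variable [TopologicalSpace N] [TopologicalSpace G]

theorem isInducing_left_right :
    Topology.IsInducing (fun p : N ⋊[φ] G => (p.left, p.right)) :=
  ⟨rfl⟩

theorem continuous_left : Continuous (left : N ⋊[φ] G → N) :=
  continuous_fst.comp isInducing_left_right.continuous

theorem isCompact_subgroupLeft [CompactSpace G] {K : Subgroup N}
    (hKc : IsCompact (K : Set N)) (hK : ∀ g, ∀ n ∈ K, φ g n ∈ K) :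
    IsCompact (subgroupLeft K hK : Set (N ⋊[φ] G)) := by
  rw [isInducing_left_right.isCompact_iff]
  convert hKc.prod (isCompact_univ : IsCompact (Set.univ : Set G))
  ext ⟨n, g⟩
  refine ⟨?_, fun h => ⟨⟨n, g⟩, h.1, rfl⟩⟩
  rintro ⟨p, hp, hpng⟩
  obtain ⟨rfl, -⟩ := Prod.mk.inj hpng
  exact ⟨hp, trivial⟩

end SemidirectProduct

open SemidirectProduct in
theorem semidirectProduct_maximal_compact_general
    -- `G` is a (finite-dimensional real) Lie group
    {G : Type*} [TopologicalSpace G] [Group G]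
    -- `A` is a compact (finite-dimensional real) Lie group
    {A : Type*} [TopologicalSpace A] [Group A] [CompactSpace A]
    -- `A` acts on `G` by automorphisms, continuously in both variables, each `a` acting smoothly
    [MulDistribMulAction A G]
    -- `K` is an `A`-invariant maximal compact subgroup of `G`
    (K : Subgroup G) (hKcompact : IsCompact (K : Set G))
    (hKmax : ∀ L : Subgroup G, IsCompact (L : Set G) → K ≤ L → L = K)
    (hKinv : ∀ a : A, a • (K : Set G) = K) :
    -- `K ⋊ A` is a subgroup of `G ⋊ A` ...
    ∃ M : Subgroup (G ⋊[MulDistribMulAction.toMulAut A G] A),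
      (M : Set (G ⋊[MulDistribMulAction.toMulAut A G] A)) = {p | p.left ∈ K} ∧
      -- ... which is compact ...
      IsCompact (M : Set (G ⋊[MulDistribMulAction.toMulAut A G] A)) ∧
      -- ... and maximal among compact subgroups of `G ⋊ A`
      (∀ L : Subgroup (G ⋊[MulDistribMulAction.toMulAut A G] A),
        IsCompact (L : Set (G ⋊[MulDistribMulAction.toMulAut A G] A)) → M ≤ L → L = M) := by
  have hK : ∀ a, ∀ g ∈ K, MulDistribMulAction.toMulAut A G a g ∈ K := fun a g hg =>
    (hKinv a).subset (Set.smul_mem_smul_set hg)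
  refine ⟨subgroupLeft K hK, rfl, isCompact_subgroupLeft hKcompact hK, fun L hLc hKL => ?_⟩
  have hAL := (range_inr_le_subgroupLeft K hK).trans hKL
  have hK' : L.comap inl = K := by
    refine hKmax _ ?_ ?_
    · rw [coe_comap_inl_eq_image_left hAL]
      exact hLc.image continuous_left
    · simpa only [comap_inl_subgroupLeft] using Subgroup.comap_mono (f := inl) hKL
  rw [eq_subgroupLeft_comap_inl hAL]
  simp only [hK']

/-- Let `G` be a Lie group with finitely many components, let `A` be a compact
Lie group acting on `G` by automorphisms, and let `K` be an `A`-invariant maximal compact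
subgroup of `G`.  Then `K ⋊ A = {(k, a) : k ∈ K, a ∈ A}` is a maximal compact subgroup of the
semidirect product `G ⋊ A`. -/
theorem semidirectProduct_maximal_compact
    -- `G` is a (finite-dimensional real) Lie group
    {E : Type*} [NormedAddCommGroup E] [NormedSpace ℝ E] [FiniteDimensional ℝ E]
    {G : Type*} [TopologicalSpace G] [ChartedSpace E G] [Group G] [IsTopologicalGroup G]
    [LieGroup 𝓘(ℝ, E) (⊤ : ℕ∞) G]
    -- with finitely many connected components
    (hG : Finite (ConnectedComponents G))
    -- `A` is a compact (finite-dimensional real) Lie group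
    {F : Type*} [NormedAddCommGroup F] [NormedSpace ℝ F] [FiniteDimensional ℝ F]
    {A : Type*} [TopologicalSpace A] [ChartedSpace F A] [Group A] [IsTopologicalGroup A]
    [LieGroup 𝓘(ℝ, F) (⊤ : ℕ∞) A] [CompactSpace A]
    -- `A` acts on `G` by automorphisms, continuously in both variables, each `a` acting smoothly
    [MulDistribMulAction A G] [ContinuousSMul A G]
    (hsmooth : ∀ a : A, ContMDiff 𝓘(ℝ, E) 𝓘(ℝ, E) (⊤ : ℕ∞) fun g : G => a • g)
    -- `K` is an `A`-invariant maximal compact subgroup of `G`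
    (K : Subgroup G) (hKcompact : IsCompact (K : Set G))
    (hKmax : ∀ L : Subgroup G, IsCompact (L : Set G) → K ≤ L → L = K)
    (hKinv : ∀ a : A, a • (K : Set G) = K) :
    -- `K ⋊ A` is a subgroup of `G ⋊ A` ...
    ∃ M : Subgroup (G ⋊[MulDistribMulAction.toMulAut A G] A),
      (M : Set (G ⋊[MulDistribMulAction.toMulAut A G] A)) = {p | p.left ∈ K} ∧
      -- ... which is compact ...
      IsCompact (M : Set (G ⋊[MulDistribMulAction.toMulAut A G] A)) ∧
      -- ... and maximal among compact subgroups of `G ⋊ A`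
      (∀ L : Subgroup (G ⋊[MulDistribMulAction.toMulAut A G] A),
        IsCompact (L : Set (G ⋊[MulDistribMulAction.toMulAut A G] A)) → M ≤ L → L = M) :=
  semidirectProduct_maximal_compact_general K hKcompact hKmax hKinv
end

section
/- Let G be a Lie group, let A be a compact Lie group acting on G by automorphisms, let K be an A-invariant subgroup of G, and suppose there exist linear subspaces 𝔭₁, …, 𝔭ᵣ of the Lie algebra 𝔤 of G, each invariant under Ad_G(K) and under the induced A-action on 𝔤, such that the map φ : K × 𝔭₁ × ⋯ × 𝔭ᵣ → G, φ(k, X₁, …, Xᵣ) = k·exp(X₁)⋯exp(Xᵣ), is injective. If γ₁, γ₂ : A → K are cocycles and g ∈ G satisfies γ₂(a) = g⁻¹·γ₁(a)·a(g) for all a ∈ A, then writing g = φ(k, X₁, …, Xᵣ), the element k ∈ K satisfies γ₂(a) = k⁻¹·γ₁(a)·a(k) for all a ∈ A. -/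
/-!
Both sides of the cohomology relation can be pushed through `φ`: applying `a` to
`g = φ(k, X)` gives `φ(a • k, dA a X)`, while `(γ₁ a)⁻¹ * g * γ₂ a`, rewritten by conjugating the
exponentials with `γ₂ a ∈ K`, is `φ((γ₁ a)⁻¹ k γ₂ a, Ad (γ₂ a)⁻¹ X)`. The invariance hypotheses put
both arguments in `K × 𝔭₁ × ⋯ × 𝔭ᵣ`, so injectivity of `φ` forces `a • k = (γ₁ a)⁻¹ k γ₂ a`.
-/

open scoped Manifold Pointwise

theorem map_prod_ofFn_of_map_comp {M N α β : Type*} [Monoid M] [Monoid N] (f : M →* N)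
    {e : α → M} {e' : β → N} {L : α → β} (h : ∀ x, f (e x) = e' (L x)) {n : ℕ} (X : Fin n → α) :
    f (List.ofFn fun i => e (X i)).prod = (List.ofFn fun i => e' (L (X i))).prod := by
  rw [map_list_prod, List.map_ofFn]
  simp only [Function.comp_def, h]

theorem eq_inv_mul_mul_iff_eq_inv_mul_mul {G : Type*} [Group G] {g x y z : G} :
    y = g⁻¹ * x * z ↔ z = x⁻¹ * g * y := by
  constructor <;> rintro rfl <;> group

theorem smul_mem_of_smul_set_eq {A G : Type*} [Monoid A] [MulAction A G] {S : Set G}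
    {a : A} (hS : a • S = S) {x : G} (hx : x ∈ S) : a • x ∈ S :=
  hS ▸ Set.smul_mem_smul_set hx

theorem cohomologous_in_K_of_cohomologous_of_injective_decomposition_general
    -- `G` is a (finite-dimensional real) Lie group
    {G : Type*} [Group G]
    -- `A` is a compact (finite-dimensional real) Lie group
    {A : Type*} [Group A]
    -- `A` acts on `G` by automorphisms, continuously in both variables, each `a` acting smoothly
    [MulDistribMulAction A G]
    -- the Lie algebra `𝔤` of `G` (as a real vector space), with the exponential map,
    -- the adjoint action of `G`, and the differentiated action of `A`
    (𝔤 : Type*) [AddCommGroup 𝔤] [Module ℝ 𝔤]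
    (Exp : 𝔤 → G) (Ad : G →* (𝔤 ≃ₗ[ℝ] 𝔤)) (dA : A →* (𝔤 ≃ₗ[ℝ] 𝔤))
    (hAd : ∀ (g : G) (X : 𝔤), g * Exp X * g⁻¹ = Exp (Ad g X))
    (hdA : ∀ (a : A) (X : 𝔤), a • Exp X = Exp (dA a X))
    -- `K` is an `A`-invariant subgroup of `G`
    (K : Subgroup G) (hKinv : ∀ a : A, a • (K : Set G) = K)
    -- `𝔭 0, …, 𝔭 (r-1)` are linear subspaces of `𝔤` invariant under `Ad_G(K)` and `A`
    (r : ℕ) (𝔭 : Fin r → Submodule ℝ 𝔤)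
    (h𝔭Ad : ∀ (i : Fin r), ∀ k ∈ K, ∀ X ∈ 𝔭 i, Ad k X ∈ 𝔭 i)
    (h𝔭dA : ∀ (i : Fin r) (a : A), ∀ X ∈ 𝔭 i, dA a X ∈ 𝔭 i)
    -- the map `φ(k, X₁, …, Xᵣ) = k · exp X₁ ⋯ exp Xᵣ` is injective
    (hφinj : Function.Injective
      (fun p : K × (∀ i : Fin r, 𝔭 i) =>
        (p.1 : G) * (List.ofFn fun i : Fin r => Exp (p.2 i : 𝔤)).prod))
    -- `γ₁, γ₂ : A → K` are cocycles
    (γ₁ γ₂ : A → G)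
    (hγ₁K : ∀ a : A, γ₁ a ∈ K) (hγ₂K : ∀ a : A, γ₂ a ∈ K)
    -- `g ∈ G` realizes a cohomology between `γ₁` and `γ₂`
    (g : G) (hg : ∀ a : A, γ₂ a = g⁻¹ * γ₁ a * a • g)
    -- write `g = φ(k, X₁, …, Xᵣ)`
    (k : K) (X : ∀ i : Fin r, 𝔭 i)
    (hgφ : g = (k : G) * (List.ofFn fun i : Fin r => Exp (X i : 𝔤)).prod) :
    -- then `k` realizes a cohomology between `γ₁` and `γ₂` inside `K`
    ∀ a : A, γ₂ a = (k : G)⁻¹ * γ₁ a * a • (k : G) := by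
  intro a
  have hsmul : a • g = a • (k : G) * (List.ofFn fun i => Exp (dA a (X i))).prod := by
    rw [hgφ, smul_mul']
    congr 1
    exact map_prod_ofFn_of_map_comp (MulDistribMulAction.toMonoidHom G a) (hdA a) _
  have hconj : a • g = (γ₁ a)⁻¹ * k * γ₂ a *
      (List.ofFn fun i => Exp (Ad (γ₂ a)⁻¹ (X i))).prod := by
    have hprod := map_prod_ofFn_of_map_comp (MulAut.conj (γ₂ a)⁻¹).toMonoidHom
      (hAd (γ₂ a)⁻¹) fun i => (X i : 𝔤)
    simp only [MulEquiv.toMonoidHom_eq_coe, MonoidHom.coe_coe, MulAut.conj_apply,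
      inv_inv] at hprod
    rw [← hprod, eq_inv_mul_mul_iff_eq_inv_mul_mul.mp (hg a), hgφ]
    group
  have hk := hφinj (a₁ := ⟨⟨a • (k : G), smul_mem_of_smul_set_eq (hKinv a) k.2⟩,
      fun i => ⟨dA a (X i), h𝔭dA i a _ (X i).2⟩⟩)
    (a₂ := ⟨⟨(γ₁ a)⁻¹ * k * γ₂ a, K.mul_mem (K.mul_mem (K.inv_mem (hγ₁K a)) k.2) (hγ₂K a)⟩,
      fun i => ⟨Ad (γ₂ a)⁻¹ (X i), h𝔭Ad i _ (K.inv_mem (hγ₂K a)) _ (X i).2⟩⟩)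
    (hsmul.symm.trans hconj)
  exact eq_inv_mul_mul_iff_eq_inv_mul_mul.mp (congrArg (fun p => (p.1 : G)) hk)

/-- Let `G` be a Lie group, `A` a compact Lie group acting on `G` by
automorphisms, `K` an `A`-invariant subgroup of `G`, and suppose there are linear subspaces
`𝔭 1, …, 𝔭 r` of the Lie algebra `𝔤` of `G`, invariant under `Ad_G(K)` and `A`, such that
`φ : K × 𝔭 1 × ⋯ × 𝔭 r → G`, `φ(k, X₁, …, Xᵣ) = k · exp X₁ ⋯ exp Xᵣ`, is injective.
If `γ₁, γ₂ : A → K` are cocycles and `g ∈ G` satisfies `γ₂ a = g⁻¹ * γ₁ a * a • g` for all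
`a`, then writing `g = φ (k, X₁, …, Xᵣ)` one has `γ₂ a = k⁻¹ * γ₁ a * a • k` for all `a`.

The Lie algebra `𝔤` of `G`, the exponential map `Exp : 𝔤 → G`, the adjoint representation
`Ad : G →* GL(𝔤)` and the differentiated action `dA : A →* GL(𝔤)` are axiomatized through
their characteristic identities `g · Exp X · g⁻¹ = Exp (Ad g X)` and `a • Exp X = Exp (dA a X)`,
which are the only properties of them used in the statement and its proof. -/
theorem cohomologous_in_K_of_cohomologous_of_injective_decomposition
    -- `G` is a (finite-dimensional real) Lie group
    {E : Type*} [NormedAddCommGroup E] [NormedSpace ℝ E] [FiniteDimensional ℝ E]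
    {G : Type*} [TopologicalSpace G] [ChartedSpace E G] [Group G] [IsTopologicalGroup G]
    [LieGroup 𝓘(ℝ, E) (⊤ : ℕ∞) G]
    -- `A` is a compact (finite-dimensional real) Lie group
    {F : Type*} [NormedAddCommGroup F] [NormedSpace ℝ F] [FiniteDimensional ℝ F]
    {A : Type*} [TopologicalSpace A] [ChartedSpace F A] [Group A] [IsTopologicalGroup A]
    [LieGroup 𝓘(ℝ, F) (⊤ : ℕ∞) A] [CompactSpace A]
    -- `A` acts on `G` by automorphisms, continuously in both variables, each `a` acting smoothly
    [MulDistribMulAction A G] [ContinuousSMul A G]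
    (hsmooth : ∀ a : A, ContMDiff 𝓘(ℝ, E) 𝓘(ℝ, E) (⊤ : ℕ∞) fun g : G => a • g)
    -- the Lie algebra `𝔤` of `G` (as a real vector space), with the exponential map,
    -- the adjoint action of `G`, and the differentiated action of `A`
    (𝔤 : Type*) [AddCommGroup 𝔤] [Module ℝ 𝔤] [FiniteDimensional ℝ 𝔤]
    (Exp : 𝔤 → G) (Ad : G →* (𝔤 ≃ₗ[ℝ] 𝔤)) (dA : A →* (𝔤 ≃ₗ[ℝ] 𝔤))
    (hAd : ∀ (g : G) (X : 𝔤), g * Exp X * g⁻¹ = Exp (Ad g X))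
    (hdA : ∀ (a : A) (X : 𝔤), a • Exp X = Exp (dA a X))
    -- `K` is an `A`-invariant subgroup of `G`
    (K : Subgroup G) (hKinv : ∀ a : A, a • (K : Set G) = K)
    -- `𝔭 0, …, 𝔭 (r-1)` are linear subspaces of `𝔤` invariant under `Ad_G(K)` and `A`
    (r : ℕ) (𝔭 : Fin r → Submodule ℝ 𝔤)
    (h𝔭Ad : ∀ (i : Fin r), ∀ k ∈ K, ∀ X ∈ 𝔭 i, Ad k X ∈ 𝔭 i)
    (h𝔭dA : ∀ (i : Fin r) (a : A), ∀ X ∈ 𝔭 i, dA a X ∈ 𝔭 i)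
    -- the map `φ(k, X₁, …, Xᵣ) = k · exp X₁ ⋯ exp Xᵣ` is injective
    (hφinj : Function.Injective
      (fun p : K × (∀ i : Fin r, 𝔭 i) =>
        (p.1 : G) * (List.ofFn fun i : Fin r => Exp (p.2 i : 𝔤)).prod))
    -- `γ₁, γ₂ : A → K` are cocycles
    (γ₁ γ₂ : A → G) (hγ₁cont : Continuous γ₁) (hγ₂cont : Continuous γ₂)
    (hγ₁cocycle : ∀ a b : A, γ₁ (a * b) = γ₁ a * a • γ₁ b)
    (hγ₂cocycle : ∀ a b : A, γ₂ (a * b) = γ₂ a * a • γ₂ b)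
    (hγ₁K : ∀ a : A, γ₁ a ∈ K) (hγ₂K : ∀ a : A, γ₂ a ∈ K)
    -- `g ∈ G` realizes a cohomology between `γ₁` and `γ₂`
    (g : G) (hg : ∀ a : A, γ₂ a = g⁻¹ * γ₁ a * a • g)
    -- write `g = φ(k, X₁, …, Xᵣ)`
    (k : K) (X : ∀ i : Fin r, 𝔭 i)
    (hgφ : g = (k : G) * (List.ofFn fun i : Fin r => Exp (X i : 𝔤)).prod) :
    -- then `k` realizes a cohomology between `γ₁` and `γ₂` inside `K`
    ∀ a : A, γ₂ a = (k : G)⁻¹ * γ₁ a * a • (k : G) :=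
  cohomologous_in_K_of_cohomologous_of_injective_decomposition_general 𝔤 Exp Ad dA hAd hdA K hKinv r
    𝔭 h𝔭Ad h𝔭dA hφinj γ₁ γ₂ hγ₁K hγ₂K g hg k X hgφ
end
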